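/- Let Q be a probability measure on ℝ^d satisfying a Poincaré inequality with constant c. Suppose the nonnegative loss ℓ(·,z) has G-Lipschitz gradients for all z, and both ℓ(·,z) and ‖∇_hℓ(·,z)‖² belong to H¹(Q). Then for every z: E_{h∼Q}[(‖∇_h ℓ(h,z)‖²)²] ≤ 4cG²·E_{h∼Q}[‖∇_h ℓ(h,z)‖²] + (E_{h∼Q}[‖∇_h ℓ(h,z)‖²])², using that the gradient of h ↦ ‖∇_hℓ(h,z)‖² has norm at most 2G‖∇_hℓ(h,z)‖. -/

import Mathlib

/-!
Write `f = ‖∇ℓ(·, z)‖²`. Since `E[f²] = Var f + (E f)²`, the Poincaré inequality gives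
`E[f²] ≤ c E‖∇f‖² + (E f)²`. Near any point, `|f y - f x| = (‖g y‖ + ‖g x‖) |‖g y‖ - ‖g x‖|`
with `g = ∇ℓ(·, z)` `G`-Lipschitz, so `‖∇f‖ ≤ 2G‖g‖`, i.e. `‖∇f‖² ≤ 4G² f`.
-/

open MeasureTheory

/-- Membership in the Sobolev space `H¹(Q)`. -/
def MemH1 {d : ℕ} (Q : Measure (EuclideanSpace ℝ (Fin d)))
    (f : EuclideanSpace ℝ (Fin d) → ℝ) : Prop :=
  Differentiable ℝ f ∧ MemLp f 2 Q ∧ MemLp (fun h => ‖gradient f h‖) 2 Q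

open ProbabilityTheory Filter Topology
open scoped NNReal

theorem norm_fderiv_norm_sq_le_of_lipschitzWith {E F : Type*} [NormedAddCommGroup E]
    [NormedSpace ℝ E] [NormedAddCommGroup F] {g : E → F} {K : ℝ≥0} (hg : LipschitzWith K g)
    (x : E) : ‖fderiv ℝ (fun y => ‖g y‖ ^ 2) x‖ ≤ 2 * K * ‖g x‖ := by
  refine le_of_forall_pos_le_add fun ε hε => norm_fderiv_le_of_lip' ℝ (by positivity) ?_
  have hnear : ∀ᶠ y in 𝓝 x, K * (‖g y‖ + ‖g x‖) < 2 * K * ‖g x‖ + ε := by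
    have hcont : ContinuousAt (fun y => K * (‖g y‖ + ‖g x‖)) x := by
      have := hg.continuous; fun_prop
    exact hcont.eventually_lt continuousAt_const (by linarith)
  filter_upwards [hnear] with y hy
  calc ‖‖g y‖ ^ 2 - ‖g x‖ ^ 2‖ = (‖g y‖ + ‖g x‖) * |‖g y‖ - ‖g x‖| := by
        rw [Real.norm_eq_abs, sq_sub_sq, abs_mul, abs_of_nonneg (by positivity)]
    _ ≤ (‖g y‖ + ‖g x‖) * (K * ‖y - x‖) := by
        gcongr
        exact (abs_norm_sub_norm_le _ _).trans (hg.norm_sub_le y x)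
    _ = K * (‖g y‖ + ‖g x‖) * ‖y - x‖ := by ring
    _ ≤ (2 * K * ‖g x‖ + ε) * ‖y - x‖ := by gcongr

theorem norm_gradient_eq_norm_fderiv {𝕜 E : Type*} [RCLike 𝕜] [NormedAddCommGroup E]
    [InnerProductSpace 𝕜 E] [CompleteSpace E] (f : E → 𝕜) (x : E) :
    ‖gradient f x‖ = ‖fderiv 𝕜 f x‖ := by
  rw [← toDual_gradient, LinearIsometryEquiv.norm_map]

theorem integral_sq_eq_integral_sub_integral_sq_add {Ω : Type*} [MeasurableSpace Ω]
    {μ : Measure Ω} [IsProbabilityMeasure μ] {X : Ω → ℝ} (hX : MemLp X 2 μ) :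
    ∫ ω, X ω ^ 2 ∂μ = ∫ ω, (X ω - ∫ ω', X ω' ∂μ) ^ 2 ∂μ + (∫ ω, X ω ∂μ) ^ 2 := by
  rw [← variance_eq_integral hX.aemeasurable, variance_eq_sub hX]
  simp only [Pi.pow_apply, sub_add_cancel]

theorem grad_sq_second_moment_of_poincare_general
    {d : ℕ} {Z : Type*}
    (Q : Measure (EuclideanSpace ℝ (Fin d))) [IsProbabilityMeasure Q]
    (c : ℝ) (hc : 0 < c)
    (hPoinc : ∀ f : EuclideanSpace ℝ (Fin d) → ℝ, MemH1 Q f →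
      ∫ h, (f h - ∫ h', f h' ∂Q) ^ 2 ∂Q ≤ c * ∫ h, ‖gradient f h‖ ^ 2 ∂Q)
    (ℓ : EuclideanSpace ℝ (Fin d) → Z → ℝ)
    (G : ℝ)
    (hLip : ∀ z, LipschitzWith (Real.toNNReal G) (gradient (fun h => ℓ h z)))
    (hH1g : ∀ z, MemH1 Q (fun h => ‖gradient (fun h' => ℓ h' z) h‖ ^ 2)) :
    ∀ z, ∫ h, (‖gradient (fun h' => ℓ h' z) h‖ ^ 2) ^ 2 ∂Q
      ≤ 4 * c * G ^ 2 * ∫ h, ‖gradient (fun h' => ℓ h' z) h‖ ^ 2 ∂Q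
        + (∫ h, ‖gradient (fun h' => ℓ h' z) h‖ ^ 2 ∂Q) ^ 2 := by
  intro z
  set f := fun h => ‖gradient (fun h' => ℓ h' z) h‖ ^ 2 with hf
  obtain ⟨-, hf2, hgradf2⟩ := hH1g z
  have hK : (Real.toNNReal G : ℝ) ^ 2 ≤ G ^ 2 := by
    rw [Real.coe_toNNReal', ← sq_abs G]
    exact pow_le_pow_left₀ (le_max_right _ _) (max_le (le_abs_self G) (abs_nonneg G)) 2
  have hgradf : ∀ h, ‖gradient f h‖ ^ 2 ≤ 4 * G ^ 2 * f h := fun h => by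
    rw [norm_gradient_eq_norm_fderiv]
    calc ‖fderiv ℝ f h‖ ^ 2 ≤ (2 * Real.toNNReal G * ‖gradient (fun h' => ℓ h' z) h‖) ^ 2 :=
          pow_le_pow_left₀ (norm_nonneg _) (norm_fderiv_norm_sq_le_of_lipschitzWith (hLip z) h) 2
      _ ≤ 4 * G ^ 2 * f h := by rw [hf]; nlinarith [sq_nonneg ‖gradient (fun h' => ℓ h' z) h‖]
  calc ∫ h, f h ^ 2 ∂Q = ∫ h, (f h - ∫ h', f h' ∂Q) ^ 2 ∂Q + (∫ h, f h ∂Q) ^ 2 :=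
        integral_sq_eq_integral_sub_integral_sq_add hf2
    _ ≤ c * ∫ h, ‖gradient f h‖ ^ 2 ∂Q + (∫ h, f h ∂Q) ^ 2 := by gcongr; exact hPoinc f (hH1g z)
    _ ≤ c * ∫ h, 4 * G ^ 2 * f h ∂Q + (∫ h, f h ∂Q) ^ 2 := by
        gcongr c * ?_ + _
        exact integral_mono hgradf2.integrable_sq ((hf2.integrable one_le_two).const_mul _) hgradf
    _ = 4 * c * G ^ 2 * ∫ h, f h ∂Q + (∫ h, f h ∂Q) ^ 2 := by rw [integral_const_mul]; ring

/-- second moment bound on squared gradient norms under a Poincaré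
inequality, for losses with `G`-Lipschitz gradients. -/
theorem grad_sq_second_moment_of_poincare
    {d : ℕ} {Z : Type*} [MeasurableSpace Z]
    (Q : Measure (EuclideanSpace ℝ (Fin d))) [IsProbabilityMeasure Q]
    (c : ℝ) (hc : 0 < c)
    (hPoinc : ∀ f : EuclideanSpace ℝ (Fin d) → ℝ, MemH1 Q f →
      ∫ h, (f h - ∫ h', f h' ∂Q) ^ 2 ∂Q ≤ c * ∫ h, ‖gradient f h‖ ^ 2 ∂Q)
    (ℓ : EuclideanSpace ℝ (Fin d) → Z → ℝ)
    (hnonneg : ∀ h z, 0 ≤ ℓ h z)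
    (G : ℝ) (hG : 0 < G)
    (hLip : ∀ z, LipschitzWith (Real.toNNReal G) (gradient (fun h => ℓ h z)))
    (hH1 : ∀ z, MemH1 Q (fun h => ℓ h z))
    (hH1g : ∀ z, MemH1 Q (fun h => ‖gradient (fun h' => ℓ h' z) h‖ ^ 2)) :
    ∀ z, ∫ h, (‖gradient (fun h' => ℓ h' z) h‖ ^ 2) ^ 2 ∂Q
      ≤ 4 * c * G ^ 2 * ∫ h, ‖gradient (fun h' => ℓ h' z) h‖ ^ 2 ∂Q
        + (∫ h, ‖gradient (fun h' => ℓ h' z) h‖ ^ 2 ∂Q) ^ 2 :=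
  grad_sq_second_moment_of_poincare_general Q c hc hPoinc ℓ G hLip hH1g
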